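/- Let F(x) := ∫₀ˣ (1−t⁶)^{−1/2} dt and H(x) := ∫₀ˣ (1−t²)^{−5/6} dt. For every s ∈ [0,1], H( √( 1 − ((1−s²)/(1+2s²))³ ) ) = 3 · F(s). (This is the identity sin_{6/5,2}(2x) = √(1 − ((1−g(x)²)/(1+2g(x)²))³) with g(x) = sin_{2,6}(2x/3).) -/

import Mathlib

/-!
With `φ(t) = (1 - t²) / (1 + 2t²)`, the map `u(t) = √(1 - φ(t)³)` is increasing on `[0, 1]` and
satisfies `1 - u² = φ³` and `(1 - u²)^(-5/6) u' = 3 (1 - t⁶)^(-1/2)` (check after squaring, using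
`1 - t⁶ = (1 - t²)(1 + t² + t⁴)`). Substituting `u = u(t)` turns `H(u(s))` into `3 F(s)`. Since `u`
is monotone, the change of variables needs no integrability of the integrand, which is singular
at `t = 1`.
-/

/-- `F = F_{2,6}`, the incomplete integral `∫₀ˣ (1−t⁶)^{−1/2} dt`. -/
noncomputable def F26 (x : ℝ) : ℝ := ∫ t in (0:ℝ)..x, (1 - t ^ 6) ^ (-(1/2) : ℝ)

/-- `H = F_{6/5,2}`, the incomplete integral `∫₀ˣ (1−t²)^{−5/6} dt`. -/
noncomputable def H652 (x : ℝ) : ℝ := ∫ t in (0:ℝ)..x, (1 - t ^ 2) ^ (-(5/6) : ℝ)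

open MeasureTheory

lemma sq_rpow_neg {x : ℝ} (hx : 0 ≤ x) (a : ℝ) : (x ^ (-a)) ^ 2 = (x ^ (2 * a))⁻¹ := by
  rw [← Real.rpow_natCast, ← Real.rpow_mul hx, ← Real.rpow_neg hx]
  ring_nf

/-- `√(1 - φ(t)³)` for `t ≥ 0`, written in a form that is differentiable at `t = 0`. -/
noncomputable def tripleMap (t : ℝ) : ℝ := 3 * t * √((1 + t ^ 2 + t ^ 4) / (1 + 2 * t ^ 2) ^ 3)

noncomputable def tripleMap' (t : ℝ) : ℝ :=
  3 * (1 - t ^ 2) ^ 2 / (√((1 + t ^ 2 + t ^ 4) / (1 + 2 * t ^ 2) ^ 3) * (1 + 2 * t ^ 2) ^ 4)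

lemma hasDerivAt_tripleMap (t : ℝ) : HasDerivAt tripleMap (tripleMap' t) t := by
  have hq := ((hasDerivAt_pow 2 t).const_add 1).fun_add (hasDerivAt_pow 4 t)
  have hy := ((hasDerivAt_pow 2 t).const_mul 2).const_add 1
  have hw := (hq.fun_div (hy.fun_pow 3) (by positivity)).sqrt (by positivity)
  refine (((hasDerivAt_id t).const_mul 3).fun_mul hw).congr_deriv ?_
  have hr := Real.sq_sqrt (show 0 ≤ (1 + t ^ 2 + t ^ 4) / (1 + 2 * t ^ 2) ^ 3 by positivity)
  have hr0 : 0 < √((1 + t ^ 2 + t ^ 4) / (1 + 2 * t ^ 2) ^ 3) := by positivity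
  simp only [tripleMap', id, Nat.cast_ofNat, Nat.reduceSub, pow_one]
  set r := √((1 + t ^ 2 + t ^ 4) / (1 + 2 * t ^ 2) ^ 3)
  rw [eq_div_iff (by positivity)] at hr
  field_simp
  linear_combination 2 * (1 + 2 * t ^ 2) * hr

lemma one_sub_tripleMap_sq (t : ℝ) :
    1 - tripleMap t ^ 2 = ((1 - t ^ 2) / (1 + 2 * t ^ 2)) ^ 3 := by
  rw [tripleMap, mul_pow, Real.sq_sqrt (by positivity)]
  field_simp
  ring

lemma tripleMap_nonneg {t : ℝ} (ht : 0 ≤ t) : 0 ≤ tripleMap t := by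
  unfold tripleMap; positivity

lemma tripleMap'_nonneg (t : ℝ) : 0 ≤ tripleMap' t := by
  unfold tripleMap'; positivity

lemma sq_tripleMap' (t : ℝ) :
    tripleMap' t ^ 2 = 9 * (1 - t ^ 2) ^ 4 / ((1 + t ^ 2 + t ^ 4) * (1 + 2 * t ^ 2) ^ 5) := by
  rw [tripleMap', div_pow, mul_pow _ ((1 + 2 * t ^ 2) ^ 4), Real.sq_sqrt (by positivity)]
  field_simp
  ring

lemma tripleMap_integrand {t : ℝ} (ht : t ^ 2 < 1) :
    (1 - tripleMap t ^ 2) ^ (-(5 / 6) : ℝ) * tripleMap' t = 3 * (1 - t ^ 6) ^ (-(1 / 2) : ℝ) := by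
  have hx : 0 < 1 - t ^ 2 := by linarith
  have hc : 0 ≤ (1 - t ^ 2) / (1 + 2 * t ^ 2) := by positivity
  have h6 : 1 - t ^ 6 = (1 - t ^ 2) * (1 + t ^ 2 + t ^ 4) := by ring
  have hH : ((1 - tripleMap t ^ 2) ^ (-(5 / 6) : ℝ)) ^ 2
      = (((1 - t ^ 2) / (1 + 2 * t ^ 2)) ^ 5)⁻¹ := by
    rw [one_sub_tripleMap_sq, sq_rpow_neg (by positivity), ← Real.rpow_natCast _ 3,
      ← Real.rpow_mul hc]
    norm_num
  have hF : ((1 - t ^ 6) ^ (-(1 / 2) : ℝ)) ^ 2 = ((1 - t ^ 2) * (1 + t ^ 2 + t ^ 4))⁻¹ := by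
    rw [sq_rpow_neg (by rw [h6]; positivity), h6]
    norm_num
  have hL : 0 ≤ (1 - tripleMap t ^ 2) ^ (-(5 / 6) : ℝ) * tripleMap' t :=
    mul_nonneg (Real.rpow_nonneg (by rw [one_sub_tripleMap_sq]; positivity) _) (tripleMap'_nonneg t)
  rw [← pow_left_inj₀ hL (by rw [h6]; positivity) two_ne_zero,
    mul_pow, mul_pow, hH, hF, sq_tripleMap']
  field_simp
  ring

lemma H652_tripleMap {s : ℝ} (hs0 : 0 ≤ s) (hs1 : s ≤ 1) : H652 (tripleMap s) = 3 * F26 s := by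
  have hsubst := intervalIntegral.integral_comp_mul_deriv_of_deriv_nonneg
    (g := fun u => (1 - u ^ 2) ^ (-(5 / 6) : ℝ)) (a := 0) (b := s)
    (fun t _ => (hasDerivAt_tripleMap t).continuousAt.continuousWithinAt)
    (fun t _ => hasDerivAt_tripleMap t) (fun t _ => tripleMap'_nonneg t)
  rw [show tripleMap 0 = 0 by simp [tripleMap]] at hsubst
  rw [H652, ← hsubst, F26, ← intervalIntegral.integral_const_mul,
    intervalIntegral.integral_of_le hs0, intervalIntegral.integral_of_le hs0,
    integral_Ioc_eq_integral_Ioo, integral_Ioc_eq_integral_Ioo]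
  refine setIntegral_congr_fun measurableSet_Ioo fun t ht => tripleMap_integrand ?_
  nlinarith [ht.1, ht.2]

/-- The identity `sin_{6/5,2}(2x) = √(1 − ((1−g(x)²)/(1+2g(x)²))³)` with
`g(x) = sin_{2,6}(2x/3)`, expressed via the integrals. -/
theorem f_in_terms_of_g (s : ℝ) (hs : s ∈ Set.Icc (0:ℝ) 1) :
    H652 (Real.sqrt (1 - ((1 - s ^ 2) / (1 + 2 * s ^ 2)) ^ 3)) = 3 * F26 s := by
  rw [← one_sub_tripleMap_sq, sub_sub_cancel, Real.sqrt_sq (tripleMap_nonneg hs.1)]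
  exact H652_tripleMap hs.1 hs.2
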